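/- arXiv:2308.11533 — 7 statements merged into one kernel-verified Lean document; each statement's English description precedes it below -/
import Mathlib

section
/- Let A be a bounded operator on a Hilbert space H' with ‖A‖ ≤ 1 and let B be a bounded operator on a Hilbert space H with σ(B) ⊂ {z : |z| > 1}. Then for every bounded operator X : H → H', ‖X‖ ≤ γ ‖AX − XB‖, where γ = ∑_{n=1}^∞ ‖B^{-n}‖. -/
set_option maxHeartbeats 1000000

open ContinuousLinearMap Filter

theorem norm_solution_le_of_sylvester
    {H H' : Type*} [NormedAddCommGroup H] [InnerProductSpace ℂ H] [CompleteSpace H]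
    [NormedAddCommGroup H'] [InnerProductSpace ℂ H'] [CompleteSpace H']
    (A : H' →L[ℂ] H') (hA : ‖A‖ ≤ 1)
    (B : (H →L[ℂ] H)ˣ)
    (hB : spectrum ℂ (B : H →L[ℂ] H) ⊆ {z : ℂ | 1 < ‖z‖})
    (X : H →L[ℂ] H') :
    ‖X‖ ≤ (∑' n : ℕ, ‖((B⁻¹ : (H →L[ℂ] H)ˣ) : H →L[ℂ] H) ^ (n + 1)‖) *
      ‖A.comp X - X.comp (B : H →L[ℂ] H)‖ := by
  rcases subsingleton_or_nontrivial H with hH | hH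
  · have : X = 0 := Subsingleton.elim _ _
    subst this
    simp
  set T : H →L[ℂ] H := ((B⁻¹ : (H →L[ℂ] H)ˣ) : H →L[ℂ] H) with hTdef
  -- spectral radius of T is < 1
  have hnt : Nontrivial (H →L[ℂ] H) := by
    obtain ⟨x, hx⟩ := exists_ne (0 : H)
    exact ⟨1, 0, fun h => hx (by simpa using DFunLike.congr_fun h x)⟩
  have hrad : spectralRadius ℂ T < 1 := by
    have := spectrum.spectralRadius_lt_of_forall_lt (a := T) (r := 1) ?_
    · simpa using this
    · intro z hz
      have hz0 : z ≠ 0 := by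
        have := Units.zero_notMem_spectrum (R := ℂ) (B⁻¹)
        exact fun h => this (h ▸ hz)
      have h2 := (spectrum.inv_mem_iff (r := Units.mk0 z hz0) (a := B⁻¹)).mp hz
      simp only [inv_inv, Units.val_inv_eq_inv_val, Units.val_mk0] at h2
      have h1 : 1 < ‖z⁻¹‖ := hB h2
      have : 1 < ‖z‖⁻¹ := by simpa [map_inv₀] using h1
      have hp : (0:ℝ) < ‖z‖ := norm_pos_iff.mpr hz0
      have hzlt : ‖z‖ < 1 := by
        have h3 := mul_lt_mul_of_pos_left this hp
        rw [mul_inv_cancel₀ hp.ne'] at h3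
        simpa using h3
      exact_mod_cast hzlt
  -- geometric decay of powers of T
  obtain ⟨ρ, hρ1, hρ2⟩ := exists_between hrad
  have hρtop : ρ ≠ ⊤ := (hρ2.trans_le le_top).ne
  set r : ℝ := ρ.toReal with hrdef
  have hr1 : r < 1 := by
    have := (ENNReal.toReal_lt_toReal hρtop (by simp)).mpr hρ2
    simpa using this
  have hr0 : (0:ℝ) ≤ r := ENNReal.toReal_nonneg
  have hev : ∀ᶠ n : ℕ in atTop, ‖T ^ n‖ ≤ r ^ n := by
    have hg := spectrum.pow_nnnorm_pow_one_div_tendsto_nhds_spectralRadius T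
    filter_upwards [hg.eventually_lt_const hρ1, eventually_ge_atTop 1] with n hn hn1
    have hn0 : (n:ℝ) ≠ 0 := by positivity
    have h4 : (‖T ^ n‖₊ : ENNReal) ≤ ρ ^ (n:ℝ) := by
      calc (‖T ^ n‖₊ : ENNReal) = ((‖T ^ n‖₊ : ENNReal) ^ (1/(n:ℝ))) ^ (n:ℝ) := by
            rw [← ENNReal.rpow_mul, one_div_mul_cancel hn0, ENNReal.rpow_one]
        _ ≤ ρ ^ (n:ℝ) := ENNReal.rpow_le_rpow hn.le (by positivity)
    rw [ENNReal.rpow_natCast] at h4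
    have h5 := ENNReal.toReal_mono (ENNReal.pow_ne_top hρtop) h4
    simpa [ENNReal.toReal_pow] using h5
  have hev' : ∀ᶠ n : ℕ in atTop, ‖T ^ (n+1)‖ ≤ r ^ (n+1) :=
    (tendsto_add_atTop_nat 1).eventually hev
  have hsum : Summable (fun n : ℕ => ‖T ^ (n+1)‖) := by
    apply summable_of_isBigO_nat (summable_geometric_of_lt_one hr0 hr1)
    refine Asymptotics.IsBigO.of_bound 1 ?_
    filter_upwards [hev'] with n hn
    have hmono : r ^ (n+1) ≤ r ^ n := pow_le_pow_of_le_one hr0 hr1.le (by omega)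
    calc ‖‖T ^ (n+1)‖‖ = ‖T ^ (n+1)‖ := by rw [norm_norm]
      _ ≤ r ^ n := hn.trans hmono
      _ ≤ 1 * ‖r ^ n‖ := by rw [one_mul, Real.norm_eq_abs, abs_of_nonneg (by positivity)]
  have hto : Tendsto (fun n : ℕ => ‖T ^ n‖) atTop (nhds 0) :=
    squeeze_zero' (Eventually.of_forall fun n => norm_nonneg _) hev
      (tendsto_pow_atTop_nhds_zero_of_lt_one hr0 hr1)
  -- telescoping identity
  set C : H →L[ℂ] H' := A.comp X - X.comp (B : H →L[ℂ] H) with hCdef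
  have hBT : ∀ N : ℕ, ((B : H →L[ℂ] H)).comp (T ^ (N+1)) = T ^ N := by
    intro N
    have huv : ((B : (H →L[ℂ] H)ˣ) * (B⁻¹) ^ (N+1) : (H →L[ℂ] H)ˣ) = (B⁻¹) ^ N := by
      group
    have h6 := congrArg Units.val huv
    simpa [Units.val_mul, hTdef, mul_def] using h6
  have key : ∀ N : ℕ, (A ^ N).comp (X.comp (T ^ N)) - X
      = ∑ n ∈ Finset.range N, (A ^ n).comp (C.comp (T ^ (n+1))) := by
    intro N
    induction N with
    | zero => simp [one_def]
    | succ N ih =>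
      rw [Finset.sum_range_succ, ← ih]
      have h7 : (A ^ N).comp (C.comp (T ^ (N+1)))
          = (A ^ (N+1)).comp (X.comp (T ^ (N+1))) - (A ^ N).comp (X.comp (T ^ N)) := by
        rw [hCdef, sub_comp, comp_sub, comp_assoc, comp_assoc, hBT N]
        congr 1
      rw [h7]
      abel
  -- norm bound for each N
  have hAn : ∀ n : ℕ, ‖A ^ n‖ ≤ 1 := by
    intro n
    induction n with
    | zero => simpa [pow_zero, one_def] using (norm_id_le : ‖ContinuousLinearMap.id ℂ H'‖ ≤ 1)
    | succ n ih =>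
      rw [pow_succ]
      exact le_trans (norm_mul_le _ _) (mul_le_one₀ ih (norm_nonneg _) hA)
  have hterm : ∀ n : ℕ, ‖(A ^ n).comp (C.comp (T ^ (n+1)))‖ ≤ ‖T ^ (n+1)‖ * ‖C‖ := by
    intro n
    calc ‖(A ^ n).comp (C.comp (T ^ (n+1)))‖ ≤ ‖A ^ n‖ * ‖C.comp (T ^ (n+1))‖ :=
          opNorm_comp_le _ _
      _ ≤ 1 * (‖C‖ * ‖T ^ (n+1)‖) :=
          mul_le_mul (hAn n) (opNorm_comp_le _ _) (norm_nonneg _) zero_le_one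
      _ = ‖T ^ (n+1)‖ * ‖C‖ := by ring
  set γ : ℝ := ∑' n : ℕ, ‖T ^ (n+1)‖ with hγdef
  have hbound : ∀ N : ℕ, ‖X‖ ≤ ‖X‖ * ‖T ^ N‖ + γ * ‖C‖ := by
    intro N
    have h8 : X = (A ^ N).comp (X.comp (T ^ N)) - ∑ n ∈ Finset.range N, (A ^ n).comp (C.comp (T ^ (n+1))) := by
      rw [← key N]; abel
    calc ‖X‖ ≤ ‖(A ^ N).comp (X.comp (T ^ N))‖ + ‖∑ n ∈ Finset.range N, (A ^ n).comp (C.comp (T ^ (n+1)))‖ := by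
          conv_lhs => rw [h8]
          exact norm_sub_le _ _
      _ ≤ ‖X‖ * ‖T ^ N‖ + γ * ‖C‖ := by
          gcongr ?_ + ?_
          · calc ‖(A ^ N).comp (X.comp (T ^ N))‖ ≤ ‖A ^ N‖ * ‖X.comp (T ^ N)‖ := opNorm_comp_le _ _
              _ ≤ 1 * (‖X‖ * ‖T ^ N‖) :=
                  mul_le_mul (hAn N) (opNorm_comp_le _ _) (norm_nonneg _) zero_le_one
              _ = ‖X‖ * ‖T ^ N‖ := one_mul _
          · calc ‖∑ n ∈ Finset.range N, (A ^ n).comp (C.comp (T ^ (n+1)))‖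
                ≤ ∑ n ∈ Finset.range N, ‖(A ^ n).comp (C.comp (T ^ (n+1)))‖ := norm_sum_le _ _
              _ ≤ ∑ n ∈ Finset.range N, ‖T ^ (n+1)‖ * ‖C‖ := Finset.sum_le_sum fun n _ => hterm n
              _ = (∑ n ∈ Finset.range N, ‖T ^ (n+1)‖) * ‖C‖ := (Finset.sum_mul _ _ _).symm
              _ ≤ γ * ‖C‖ := by
                  gcongr
                  exact Summable.sum_le_tsum _ (fun n _ => norm_nonneg _) hsum
  have hlim : Tendsto (fun N : ℕ => ‖X‖ * ‖T ^ N‖ + γ * ‖C‖) atTop (nhds (γ * ‖C‖)) := by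
    have := (hto.const_mul ‖X‖).add_const (γ * ‖C‖)
    simpa using this
  exact ge_of_tendsto' hlim hbound
end

section
/- Under the assumptions ‖A‖ ≤ 1 and σ(B) ⊂ {z : |z| > 1}, the Sylvester operator S_{A,B}(X) = AX − XB on B(H, H') is invertible (bijective). -/
/-!
Write `C = B⁻¹`, so that `AX - XB = -(X - AXC)B`. Right multiplication by `B` is invertible, and
`T X = AXC` satisfies `‖Tⁿ‖ ≤ ‖Aⁿ‖ ‖Cⁿ‖`, so Gelfand's formula gives
`ρ(T) ≤ ρ(A) ρ(C) ≤ ‖A‖ ρ(C) < 1`: the spectrum of `C` is `σ(B)⁻¹`, which lies in the open unit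
disc. Hence `1 - T` is invertible too.
-/

open ContinuousLinearMap Filter ENNReal

theorem isUnit_one_sub_of_spectralRadius_lt_one (𝕜 : Type*) {A : Type*} [NormedField 𝕜]
    [NormedRing A] [NormedAlgebra 𝕜 A] {a : A} (h : spectralRadius 𝕜 a < 1) :
    IsUnit (1 - a) := by
  have := spectrum.mem_resolventSet_of_spectralRadius_lt (k := (1 : 𝕜)) (by simpa using h)
  simpa using spectrum.mem_resolventSet_iff.mp this

theorem spectralRadius_inv_lt_one {A : Type*} [NormedRing A] [NormedAlgebra ℂ A] [CompleteSpace A]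
    (u : Aˣ) (hu : spectrum ℂ (u : A) ⊆ {z | 1 < ‖z‖}) : spectralRadius ℂ (↑u⁻¹ : A) < 1 := by
  cases subsingleton_or_nontrivial A
  · simp
  refine spectrum.spectralRadius_lt_of_forall_lt _ fun k hk => ?_
  rw [← spectrum.map_inv] at hk
  have hk' : 1 < ‖k‖⁻¹ := by simpa using hu (Set.mem_inv.mp hk)
  exact_mod_cast (one_lt_inv_iff₀.mp hk').2

namespace ContinuousLinearMap

section

variable {𝕜 E F : Type*} [NontriviallyNormedField 𝕜] [NormedAddCommGroup E] [NormedSpace 𝕜 E]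
  [NormedAddCommGroup F] [NormedSpace 𝕜 F]

theorem spectralRadius_le_nnnorm [CompleteSpace E] (A : E →L[𝕜] E) :
    spectralRadius 𝕜 A ≤ ‖A‖₊ := by
  cases subsingleton_or_nontrivial E
  · simp
  · exact spectrum.spectralRadius_le_nnnorm A

/-- `X ↦ A ∘ X ∘ C` -/
noncomputable def compLeftRight (A : F →L[𝕜] F) (C : E →L[𝕜] E) :
    (E →L[𝕜] F) →L[𝕜] E →L[𝕜] F :=
  compL 𝕜 E F F A ∘L (compL 𝕜 E E F).flip C

@[simp]
theorem compLeftRight_one : compLeftRight (1 : F →L[𝕜] F) (1 : E →L[𝕜] E) = 1 :=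
  rfl

theorem compLeftRight_mul (A A' : F →L[𝕜] F) (C C' : E →L[𝕜] E) :
    compLeftRight A C * compLeftRight A' C' = compLeftRight (A * A') (C' * C) :=
  rfl

theorem compLeftRight_pow (A : F →L[𝕜] F) (C : E →L[𝕜] E) (n : ℕ) :
    compLeftRight A C ^ n = compLeftRight (A ^ n) (C ^ n) := by
  induction n with
  | zero => rfl
  | succ n ih => rw [pow_succ, ih, compLeftRight_mul, pow_succ, pow_succ']

theorem isUnit_compLeftRight {A : F →L[𝕜] F} {C : E →L[𝕜] E} (hA : IsUnit A) (hC : IsUnit C) :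
    IsUnit (compLeftRight A C) := by
  obtain ⟨u, rfl⟩ := hA
  obtain ⟨v, rfl⟩ := hC
  exact ⟨⟨compLeftRight u v, compLeftRight ↑u⁻¹ ↑v⁻¹, by simp [compLeftRight_mul],
    by simp [compLeftRight_mul]⟩, rfl⟩

theorem compLeftRight_sub_compLeftRight_eq_neg_mul (A : F →L[𝕜] F) {B C : E →L[𝕜] E}
    (hCB : C * B = 1) :
    compLeftRight A 1 - compLeftRight 1 B = -(compLeftRight 1 B * (1 - compLeftRight A C)) := by
  rw [mul_sub, mul_one, compLeftRight_mul, one_mul, hCB, neg_sub]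

theorem norm_compLeftRight_le (A : F →L[𝕜] F) (C : E →L[𝕜] E) :
    ‖compLeftRight A C‖ ≤ ‖A‖ * ‖C‖ := by
  refine opNorm_le_bound _ (by positivity) fun X => ?_
  calc ‖A ∘L X ∘L C‖ ≤ ‖A‖ * (‖X‖ * ‖C‖) :=
        (opNorm_comp_le _ _).trans (by gcongr; exact opNorm_comp_le _ _)
    _ = ‖A‖ * ‖C‖ * ‖X‖ := by ring

end

theorem spectralRadius_compLeftRight_le {E F : Type*} [NormedAddCommGroup E] [NormedSpace ℂ E]
    [CompleteSpace E] [NormedAddCommGroup F] [NormedSpace ℂ F] [CompleteSpace F]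
    (A : F →L[ℂ] F) (C : E →L[ℂ] E) :
    spectralRadius ℂ (compLeftRight A C) ≤ spectralRadius ℂ A * spectralRadius ℂ C := by
  have hA := spectrum.pow_nnnorm_pow_one_div_tendsto_nhds_spectralRadius A
  have hC := spectrum.pow_nnnorm_pow_one_div_tendsto_nhds_spectralRadius C
  have hA_ne_top : spectralRadius ℂ A ≠ ∞ := ((spectralRadius_le_nnnorm A).trans_lt coe_lt_top).ne
  have hC_ne_top : spectralRadius ℂ C ≠ ∞ := ((spectralRadius_le_nnnorm C).trans_lt coe_lt_top).ne
  have hAC := ENNReal.Tendsto.mul hA (.inr hC_ne_top) hC (.inr hA_ne_top)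
  have hT := spectrum.spectralRadius_le_liminf_pow_nnnorm_pow_one_div ℂ (compLeftRight A C)
  have hT_liminf : (atTop.liminf fun n : ℕ => (‖compLeftRight A C ^ n‖₊ : ℝ≥0∞) ^ (1 / n : ℝ)) ≤
      atTop.liminf fun n : ℕ =>
        (‖A ^ n‖₊ : ℝ≥0∞) ^ (1 / n : ℝ) * (‖C ^ n‖₊ : ℝ≥0∞) ^ (1 / n : ℝ) := by
    refine liminf_le_liminf (.of_forall fun n => ?_)
    rw [← ENNReal.mul_rpow_of_nonneg _ _ (by positivity), compLeftRight_pow]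
    gcongr
    exact_mod_cast norm_compLeftRight_le (A ^ n) (C ^ n)
  exact hT.trans (hT_liminf.trans_eq hAC.liminf_eq)

end ContinuousLinearMap

theorem sylvester_operator_bijective
    {H H' : Type*} [NormedAddCommGroup H] [InnerProductSpace ℂ H] [CompleteSpace H]
    [NormedAddCommGroup H'] [InnerProductSpace ℂ H'] [CompleteSpace H']
    (A : H' →L[ℂ] H') (hA : ‖A‖ ≤ 1)
    (B : H →L[ℂ] H)
    (hB : spectrum ℂ B ⊆ {z : ℂ | 1 < ‖z‖}) :
    Function.Bijective (fun X : H →L[ℂ] H' => A.comp X - X.comp B) := by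
  obtain ⟨u, rfl⟩ : IsUnit B := spectrum.zero_notMem_iff ℂ |>.mp fun h => absurd (hB h) (by simp)
  set T := compLeftRight A (↑u⁻¹ : H →L[ℂ] H)
  have hρA : spectralRadius ℂ A ≤ 1 := (spectralRadius_le_nnnorm A).trans (by exact_mod_cast hA)
  have hρT : spectralRadius ℂ T < 1 :=
    (spectralRadius_compLeftRight_le _ _).trans_lt
      ((mul_le_of_le_one_left bot_le hρA).trans_lt (spectralRadius_inv_lt_one u hB))
  have hS : (fun X : H →L[ℂ] H' => A ∘L X - X ∘L u) =
      ⇑(compLeftRight A (1 : H →L[ℂ] H) - compLeftRight (1 : H' →L[ℂ] H') (u : H →L[ℂ] H)) :=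
    rfl
  rw [hS, compLeftRight_sub_compLeftRight_eq_neg_mul A u.inv_mul, ← isUnit_iff_bijective]
  have hR : IsUnit (compLeftRight (1 : H' →L[ℂ] H') (u : H →L[ℂ] H)) :=
    isUnit_compLeftRight isUnit_one u.isUnit
  exact (hR.mul (isUnit_one_sub_of_spectralRadius_lt_one ℂ (a := T) hρT)).neg
end

section
/- Let A ∈ B(H'), B ∈ B(H), X ∈ B(H,H') and set C = AX − XB. Then for any single-variable polynomials p and q of degree at most d, there exist operators S_1,…,S_d ∈ B(H') and T_1,…,T_d ∈ B(H) such that p(A) X q(B) − q(A) X p(B) = ∑_{j=1}^d S_j C T_j. -/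
open ContinuousLinearMap Polynomial

/-! Writing `p = X * p.divX + p(0)` gives
`p(A)X - Xp(B) = A (p.divX(A)X - X p.divX(B)) + C p.divX(B)`, so by induction on the degree
`p(A)X - Xp(B) = ∑_{j<d} A^j C T_j`. As `p(B)` and `q(B)` commute,
`p(A)Xq(B) - q(A)Xp(B) = (p(A)X - Xp(B))q(B) - (q(A)X - Xq(B))p(B)`, and the two expansions combine
with `S_j = A^j`. -/

theorem Polynomial.aeval_eq_mul_aeval_divX_add {R S : Type*} [CommSemiring R] [Semiring S]
    [Algebra R S] (a : S) (p : R[X]) :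
    aeval a p = a * aeval a p.divX + algebraMap R S (p.coeff 0) := by
  conv_lhs => rw [← X_mul_divX_add p]
  rw [map_add, map_mul, aeval_X, aeval_C]

section

variable {R M M' : Type*} [CommRing R]
  [TopologicalSpace M] [AddCommGroup M] [Module R M] [ContinuousConstSMul R M]
  [IsTopologicalAddGroup M]
  [TopologicalSpace M'] [AddCommGroup M'] [Module R M'] [ContinuousConstSMul R M']
  [IsTopologicalAddGroup M']

theorem aeval_comp_sub_comp_aeval_eq_add_divX
    (A : M' →L[R] M') (B : M →L[R] M) (X : M →L[R] M') (p : R[X]) :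
    (aeval A p).comp X - X.comp (aeval B p) =
      A.comp ((aeval A p.divX).comp X - X.comp (aeval B p.divX)) +
        (A.comp X - X.comp B).comp (aeval B p.divX) := by
  rw [aeval_eq_mul_aeval_divX_add A, aeval_eq_mul_aeval_divX_add B]
  ext x
  simp only [sub_apply, add_apply, comp_apply, mul_def, ContinuousLinearMap.algebraMap_apply,
    map_sub, map_add, map_smul]
  abel

theorem exists_aeval_comp_sub_comp_aeval_eq_sum
    (A : M' →L[R] M') (B : M →L[R] M) (X : M →L[R] M') {d : ℕ} {p : R[X]}
    (hp : p.natDegree ≤ d) :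
    ∃ T : Fin d → (M →L[R] M), (aeval A p).comp X - X.comp (aeval B p) =
      ∑ j : Fin d, (A ^ (j : ℕ)).comp ((A.comp X - X.comp B).comp (T j)) := by
  induction d generalizing p with
  | zero =>
    obtain ⟨c, rfl⟩ := natDegree_eq_zero.mp (Nat.le_zero.mp hp)
    refine ⟨Fin.elim0, ?_⟩
    ext x
    simp
  | succ d ih =>
    obtain ⟨T, hT⟩ := ih (p := p.divX) (by rw [natDegree_divX_eq_natDegree_tsub_one]; omega)
    refine ⟨Fin.cons (aeval B p.divX) T, ?_⟩
    rw [aeval_comp_sub_comp_aeval_eq_add_divX, hT, Fin.sum_univ_succ, comp_finsetSum, add_comm]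
    simp only [Fin.val_zero, pow_zero, one_def, id_comp, Fin.cons_zero, Fin.val_succ,
      Fin.cons_succ, pow_succ', mul_def, ContinuousLinearMap.comp_assoc]

end

theorem sylvester_polynomial_identity_general
    {H H' : Type*} [NormedAddCommGroup H] [InnerProductSpace ℂ H]
    [NormedAddCommGroup H'] [InnerProductSpace ℂ H']
    (A : H' →L[ℂ] H') (B : H →L[ℂ] H) (X : H →L[ℂ] H')
    (C : H →L[ℂ] H') (hC : C = A.comp X - X.comp B)
    (d : ℕ) (p q : Polynomial ℂ) (hp : p.natDegree ≤ d) (hq : q.natDegree ≤ d) :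
    ∃ (S : Fin d → (H' →L[ℂ] H')) (T : Fin d → (H →L[ℂ] H)),
      (aeval A p).comp (X.comp (aeval B q)) - (aeval A q).comp (X.comp (aeval B p)) =
        ∑ j : Fin d, (S j).comp (C.comp (T j)) := by
  obtain ⟨P, hP⟩ := exists_aeval_comp_sub_comp_aeval_eq_sum A B X hp
  obtain ⟨Q, hQ⟩ := exists_aeval_comp_sub_comp_aeval_eq_sum A B X hq
  have hcomm : (aeval B p).comp (aeval B q) = (aeval B q).comp (aeval B p) :=
    ((Commute.all p q).map (aeval B)).eq
  refine ⟨fun j => A ^ (j : ℕ), fun j => (P j).comp (aeval B q) - (Q j).comp (aeval B p), ?_⟩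
  calc (aeval A p).comp (X.comp (aeval B q)) - (aeval A q).comp (X.comp (aeval B p))
      = ((aeval A p).comp X - X.comp (aeval B p)).comp (aeval B q) -
          ((aeval A q).comp X - X.comp (aeval B q)).comp (aeval B p) := by
        simp only [ContinuousLinearMap.sub_comp, ContinuousLinearMap.comp_assoc, hcomm]; abel
    _ = _ := by
        simp only [hP, hQ, hC, finsetSum_comp, ← Finset.sum_sub_distrib,
          ContinuousLinearMap.comp_assoc, ← comp_sub]

theorem sylvester_polynomial_identity
    {H H' : Type*} [NormedAddCommGroup H] [InnerProductSpace ℂ H] [CompleteSpace H]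
    [NormedAddCommGroup H'] [InnerProductSpace ℂ H'] [CompleteSpace H']
    (A : H' →L[ℂ] H') (B : H →L[ℂ] H) (X : H →L[ℂ] H')
    (C : H →L[ℂ] H') (hC : C = A.comp X - X.comp B)
    (d : ℕ) (p q : Polynomial ℂ) (hp : p.natDegree ≤ d) (hq : q.natDegree ≤ d) :
    ∃ (S : Fin d → (H' →L[ℂ] H')) (T : Fin d → (H →L[ℂ] H)),
      (aeval A p).comp (X.comp (aeval B q)) - (aeval A q).comp (X.comp (aeval B p)) =
        ∑ j : Fin d, (S j).comp (C.comp (T j)) :=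
  sylvester_polynomial_identity_general A B X C hC d p q hp hq
end

section
/- Let A ∈ B(H'), B ∈ B(H), X ∈ B(H,H') with C = AX − XB. If C has finite rank at most v, then for any polynomials p, q of degree at most k, the operator p(A) X q(B) − q(A) X p(B) has rank at most vk. -/
open ContinuousLinearMap Polynomial

/-! With `C = A X - X B`, telescoping gives `Aⁱ X - X Bⁱ = ∑_{j<i} Aʲ C B^{i-1-j}`, hence
`r(A) X - X r(B) = ∑_{j<k} Aʲ C Tⱼ` for suitable `Tⱼ` whenever `deg r ≤ k`. As `p(B)` and `q(B)`
commute, `p(A) X q(B) - q(A) X p(B) = (p(A) X - X p(B)) q(B) - (q(A) X - X q(B)) p(B)`, which is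
therefore a sum of `k` operators `Aʲ C (⋯)`, each of rank at most `rank C`. -/

namespace LinearMap

section Sum

variable {R M N P ι : Type*} [CommSemiring R] [AddCommMonoid M] [Module R M]
  [AddCommMonoid N] [Module R N] [AddCommMonoid P] [Module R P]

theorem finsetSum_comp (s : Finset ι) (f : ι → N →ₗ[R] P) (g : M →ₗ[R] N) :
    (∑ i ∈ s, f i) ∘ₗ g = ∑ i ∈ s, f i ∘ₗ g :=
  map_sum (lcomp R P g) f s

theorem comp_finsetSum (s : Finset ι) (f : N →ₗ[R] P) (g : ι → M →ₗ[R] N) :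
    f ∘ₗ (∑ i ∈ s, g i) = ∑ i ∈ s, f ∘ₗ g i :=
  map_sum (llcomp R M N P f) g s

end Sum

variable {R M M' : Type*} [CommSemiring R] [AddCommGroup M] [Module R M]
  [AddCommGroup M'] [Module R M']

theorem pow_comp_sub_comp_pow (A : Module.End R M') (B : Module.End R M) (X : M →ₗ[R] M')
    (n : ℕ) :
    (A ^ n) ∘ₗ X - X ∘ₗ (B ^ n) =
      ∑ j ∈ Finset.range n, (A ^ j) ∘ₗ (A ∘ₗ X - X ∘ₗ B) ∘ₗ (B ^ (n - 1 - j)) := by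
  induction n with
  | zero => simp [Module.End.one_eq_id]
  | succ n ih =>
    have step : (A ^ (n + 1)) ∘ₗ X - X ∘ₗ (B ^ (n + 1)) =
        ((A ^ n) ∘ₗ X - X ∘ₗ (B ^ n)) ∘ₗ B + (A ^ n) ∘ₗ (A ∘ₗ X - X ∘ₗ B) := by
      simp only [pow_succ, Module.End.mul_eq_comp, sub_comp, comp_sub, comp_assoc]
      abel
    rw [step, ih, Finset.sum_range_succ, finsetSum_comp, Nat.add_sub_cancel, Nat.sub_self,
      pow_zero, Module.End.one_eq_id, comp_id]
    congr 1
    refine Finset.sum_congr rfl fun j hj => ?_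
    have hj : n - j = n - 1 - j + 1 := by rw [Finset.mem_range] at hj; omega
    rw [hj, pow_succ, Module.End.mul_eq_comp, comp_assoc, comp_assoc]

theorem exists_aeval_comp_sub_comp_aeval_eq_sum (A : Module.End R M') (B : Module.End R M)
    (X : M →ₗ[R] M') {r : R[X]} {k : ℕ} (hr : r.natDegree ≤ k) :
    ∃ T : ℕ → Module.End R M, (aeval A r) ∘ₗ X - X ∘ₗ (aeval B r) =
      ∑ j ∈ Finset.range k, (A ^ j) ∘ₗ (A ∘ₗ X - X ∘ₗ B) ∘ₗ T j := by
  set C := A ∘ₗ X - X ∘ₗ B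
  refine ⟨fun j => ∑ i ∈ Finset.Ico (j + 1) (k + 1), r.coeff i • B ^ (i - 1 - j), ?_⟩
  have hk : r.natDegree < k + 1 := Nat.lt_succ_of_le hr
  calc (aeval A r) ∘ₗ X - X ∘ₗ (aeval B r)
      = ∑ i ∈ Finset.range (k + 1), r.coeff i • ((A ^ i) ∘ₗ X - X ∘ₗ (B ^ i)) := by
        rw [aeval_eq_sum_range' hk, aeval_eq_sum_range' hk, finsetSum_comp, comp_finsetSum,
          ← Finset.sum_sub_distrib]
        simp only [smul_comp, comp_smul, smul_sub]
    _ = ∑ i ∈ Finset.range (k + 1), ∑ j ∈ Finset.range i,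
          r.coeff i • ((A ^ j) ∘ₗ C ∘ₗ (B ^ (i - 1 - j))) := by
        simp only [pow_comp_sub_comp_pow, Finset.smul_sum, C]
    _ = ∑ j ∈ Finset.range k, ∑ i ∈ Finset.Ico (j + 1) (k + 1),
          r.coeff i • ((A ^ j) ∘ₗ C ∘ₗ (B ^ (i - 1 - j))) :=
        Finset.sum_comm' fun i j => by simp only [Finset.mem_range, Finset.mem_Ico]; omega
    _ = _ := by simp only [comp_finsetSum, comp_smul]

theorem rank_finsetSum_comp_comp_le {K U V W ι : Type*} [DivisionRing K]
    [AddCommGroup U] [Module K U] [AddCommGroup V] [Module K V] [AddCommGroup W] [Module K W]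
    (s : Finset ι) (S : ι → Module.End K W) (C : V →ₗ[K] W) (T : ι → U →ₗ[K] V) :
    rank (∑ j ∈ s, S j ∘ₗ C ∘ₗ T j) ≤ s.card * rank C :=
  calc rank (∑ j ∈ s, S j ∘ₗ C ∘ₗ T j)
      ≤ ∑ j ∈ s, rank (S j ∘ₗ C ∘ₗ T j) := rank_finsetSum_le _ _
    _ ≤ ∑ _j ∈ s, rank C :=
        Finset.sum_le_sum fun _ _ => (rank_comp_le_right _ _).trans (rank_comp_le_left _ _)
    _ = s.card * rank C := by rw [Finset.sum_const, nsmul_eq_mul]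

theorem rank_aeval_comp_comp_aeval_sub_le {K V V' : Type*} [Field K]
    [AddCommGroup V] [Module K V] [AddCommGroup V'] [Module K V']
    (A : Module.End K V') (B : Module.End K V) (X : V →ₗ[K] V')
    {p q : K[X]} {k : ℕ} (hp : p.natDegree ≤ k) (hq : q.natDegree ≤ k) :
    rank ((aeval A p) ∘ₗ X ∘ₗ (aeval B q) - (aeval A q) ∘ₗ X ∘ₗ (aeval B p)) ≤
      k * rank (A ∘ₗ X - X ∘ₗ B) := by
  obtain ⟨Tp, hTp⟩ := exists_aeval_comp_sub_comp_aeval_eq_sum A B X hp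
  obtain ⟨Tq, hTq⟩ := exists_aeval_comp_sub_comp_aeval_eq_sum A B X hq
  have hcomm : aeval B p ∘ₗ aeval B q = aeval B q ∘ₗ aeval B p := by
    rw [← Module.End.mul_eq_comp, ← map_mul, mul_comm, map_mul, Module.End.mul_eq_comp]
  have hsplit : (aeval A p) ∘ₗ X ∘ₗ (aeval B q) - (aeval A q) ∘ₗ X ∘ₗ (aeval B p) =
      ((aeval A p) ∘ₗ X - X ∘ₗ (aeval B p)) ∘ₗ (aeval B q) -
        ((aeval A q) ∘ₗ X - X ∘ₗ (aeval B q)) ∘ₗ (aeval B p) := by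
    simp only [sub_comp, comp_assoc, hcomm]
    abel
  rw [hsplit, hTp, hTq, finsetSum_comp, finsetSum_comp, ← Finset.sum_sub_distrib]
  simp only [comp_assoc, ← comp_sub]
  have hsum := rank_finsetSum_comp_comp_le (Finset.range k) (A ^ ·) (A ∘ₗ X - X ∘ₗ B)
    fun j => Tp j ∘ₗ aeval B q - Tq j ∘ₗ aeval B p
  rwa [Finset.card_range] at hsum

end LinearMap

namespace ContinuousLinearMap

variable {R M : Type*} [CommSemiring R] [TopologicalSpace M] [AddCommGroup M] [Module R M]
  [IsTopologicalAddGroup M] [ContinuousConstSMul R M]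

theorem toLinearMap_aeval (A : M →L[R] M) (p : R[X]) :
    ((aeval A p : M →L[R] M) : Module.End R M) = aeval (A : Module.End R M) p := by
  rw [aeval_def, aeval_def, ← toLinearMapRingHom_apply, hom_eval₂]
  rfl

end ContinuousLinearMap

theorem sylvester_polynomial_rank_bound_general
    {H H' : Type*} [NormedAddCommGroup H] [InnerProductSpace ℂ H]
    [NormedAddCommGroup H'] [InnerProductSpace ℂ H']
    (A : H' →L[ℂ] H') (B : H →L[ℂ] H) (X : H →L[ℂ] H')
    (C : H →L[ℂ] H') (hC : C = A.comp X - X.comp B)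
    (v k : ℕ)
    (hrank : LinearMap.rank (C : H →ₗ[ℂ] H') ≤ (v : Cardinal))
    (p q : Polynomial ℂ) (hp : p.natDegree ≤ k) (hq : q.natDegree ≤ k) :
    LinearMap.rank
      (((aeval A p).comp (X.comp (aeval B q)) -
        (aeval A q).comp (X.comp (aeval B p)) : H →L[ℂ] H') : H →ₗ[ℂ] H')
      ≤ ((v * k : ℕ) : Cardinal) := by
  subst hC
  simp only [toLinearMap_sub, toLinearMap_comp, toLinearMap_aeval] at hrank ⊢
  have hbound := LinearMap.rank_aeval_comp_comp_aeval_sub_le (A : Module.End ℂ H')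
    (B : Module.End ℂ H) (X : H →ₗ[ℂ] H') hp hq
  calc _ ≤ k * (v : Cardinal) := hbound.trans (mul_le_mul_right hrank _)
    _ = ((v * k : ℕ) : Cardinal) := by rw [mul_comm, Nat.cast_mul]

theorem sylvester_polynomial_rank_bound
    {H H' : Type*} [NormedAddCommGroup H] [InnerProductSpace ℂ H] [CompleteSpace H]
    [NormedAddCommGroup H'] [InnerProductSpace ℂ H'] [CompleteSpace H']
    (A : H' →L[ℂ] H') (B : H →L[ℂ] H) (X : H →L[ℂ] H')
    (C : H →L[ℂ] H') (hC : C = A.comp X - X.comp B)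
    (v k : ℕ)
    (hrank : LinearMap.rank (C : H →ₗ[ℂ] H') ≤ (v : Cardinal))
    (p q : Polynomial ℂ) (hp : p.natDegree ≤ k) (hq : q.natDegree ≤ k) :
    LinearMap.rank
      (((aeval A p).comp (X.comp (aeval B q)) -
        (aeval A q).comp (X.comp (aeval B p)) : H →L[ℂ] H') : H →ₗ[ℂ] H')
      ≤ ((v * k : ℕ) : Cardinal) :=
  sylvester_polynomial_rank_bound_general A B X C hC v k hrank p q hp hq
end

section
/- Let A ∈ B(H) with ‖A‖ ≤ 1 and define V_A : ℓ²(H) → ℓ²(H) by V_A(h₁, h₂, h₃, …) = (A h₁, D h₁, h₂, h₃, …) where D = √(I − A*A). Then V_A is an isometry, and for every polynomial f, f(A) = P_H f(V_A)|_H, where H is identified with the first coordinate of ℓ²(H). -/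
/-!
Since `A*A + D*D = 1`, the first coordinate `h₁` of `x` has the same norm as the pair
`(A h₁, D h₁)` that replaces it, and the remaining coordinates are only shifted, so `V_A`
preserves `ℓ²` norms. The first coordinate of `V_A x` is `A` applied to that of `x`, i.e.
the coordinate projection intertwines `V_A` with `A`, hence also `f(V_A)` with `f(A)`.
-/

open ContinuousLinearMap Polynomial

theorem ContinuousLinearMap.norm_sq_add_norm_sq_eq_of_adjoint_comp_add_eq_one
    {𝕜 E F G : Type*} [RCLike 𝕜]
    [NormedAddCommGroup E] [InnerProductSpace 𝕜 E] [CompleteSpace E]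
    [NormedAddCommGroup F] [InnerProductSpace 𝕜 F] [CompleteSpace F]
    [NormedAddCommGroup G] [InnerProductSpace 𝕜 G] [CompleteSpace G]
    {A : E →L[𝕜] F} {D : E →L[𝕜] G} (h : adjoint A ∘L A + adjoint D ∘L D = 1)
    (x : E) :
    ‖A x‖ ^ 2 + ‖D x‖ ^ 2 = ‖x‖ ^ 2 := by
  rw [apply_norm_sq_eq_inner_adjoint_right, apply_norm_sq_eq_inner_adjoint_right, ← map_add,
    ← inner_add_right, ← add_apply, h, one_apply_eq_self, inner_self_eq_norm_sq]

theorem lp.hasSum_norm_sq {ι : Type*} {E : ι → Type*} [∀ i, NormedAddCommGroup (E i)]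
    (x : lp E 2) : HasSum (fun i => ‖x i‖ ^ 2) (‖x‖ ^ 2) := by
  simpa using lp.hasSum_norm (p := 2) (by norm_num) x

theorem lp.norm_eq_of_norm_sq_add_norm_sq_eq_of_shift {E : Type*} [NormedAddCommGroup E]
    {x y : lp (fun _ : ℕ => E) 2} (hhead : ‖y 0‖ ^ 2 + ‖y 1‖ ^ 2 = ‖x 0‖ ^ 2)
    (htail : ∀ n, y (n + 2) = x (n + 1)) : ‖y‖ = ‖x‖ := by
  have hx := (hasSum_nat_add_iff' 1).2 (lp.hasSum_norm_sq x)
  have hy : HasSum (fun n => ‖y n‖ ^ 2) (‖x‖ ^ 2) := by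
    rw [← hasSum_nat_add_iff' 2]
    simpa [Finset.sum_range_succ, htail, hhead] using hx
  exact (sq_eq_sq₀ (norm_nonneg _) (norm_nonneg _)).1 ((lp.hasSum_norm_sq y).unique hy)

theorem ContinuousLinearMap.comp_aeval_eq_aeval_comp_of_comp_eq
    {R M N : Type*} [CommRing R]
    [TopologicalSpace M] [AddCommGroup M] [Module R M] [IsTopologicalAddGroup M]
    [ContinuousConstSMul R M]
    [TopologicalSpace N] [AddCommGroup N] [Module R N] [IsTopologicalAddGroup N]
    [ContinuousConstSMul R N]
    {π : M →L[R] N} {V : M →L[R] M} {A : N →L[R] N} (h : π ∘L V = A ∘L π) (f : R[X]) :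
    π ∘L aeval V f = aeval A f ∘L π := by
  induction f using Polynomial.induction_on' with
  | add p q hp hq => simp only [map_add, comp_add, add_comp, hp, hq]
  | monomial n a =>
    have hpow : π ∘L V ^ n = (A ^ n) ∘L π := by
      induction n with
      | zero => rfl
      | succ n ih =>
        rw [pow_succ, pow_succ, mul_def, mul_def, ← comp_assoc, ih, comp_assoc, h, comp_assoc]
    simp only [aeval_monomial, Algebra.algebraMap_eq_smul_one, smul_mul_assoc, one_mul,
      comp_smul, smul_comp, hpow]

theorem shift_dilation_isometry_and_polynomial_compression_general
    {H : Type*} [NormedAddCommGroup H] [InnerProductSpace ℂ H] [CompleteSpace H]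
    (A : H →L[ℂ] H)
    (D : H →L[ℂ] H) (hD : D.IsPositive) (hD2 : D * D = 1 - adjoint A * A)
    (V : lp (fun _ : ℕ => H) 2 →L[ℂ] lp (fun _ : ℕ => H) 2)
    (hV : ∀ x : lp (fun _ : ℕ => H) 2,
      (V x) 0 = A (x 0) ∧ (V x) 1 = D (x 0) ∧ ∀ n : ℕ, (V x) (n + 2) = x (n + 1)) :
    Isometry V ∧
      ∀ (f : Polynomial ℂ) (h : H),
        (aeval A f) h = ((aeval V f) (lp.single 2 0 h)) 0 := by
  have hdefect : adjoint A ∘L A + adjoint D ∘L D = 1 := by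
    rw [hD.isSelfAdjoint.adjoint_eq, ← mul_def, ← mul_def, hD2, add_sub_cancel]
  refine ⟨AddMonoidHomClass.isometry_of_norm V fun x => ?_, fun f h => ?_⟩
  · obtain ⟨h0, h1, htail⟩ := hV x
    refine lp.norm_eq_of_norm_sq_add_norm_sq_eq_of_shift ?_ htail
    rw [h0, h1]
    exact norm_sq_add_norm_sq_eq_of_adjoint_comp_add_eq_one hdefect _
  · let π := lp.evalCLM (𝕜 := ℂ) (E := fun _ : ℕ => H) (p := 2) 0
    have hπ : π ∘L V = A ∘L π := ext fun x => (hV x).1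
    simpa [π, lp.evalCLM] using
      congr($(comp_aeval_eq_aeval_comp_of_comp_eq hπ f) (lp.single 2 0 h)).symm

theorem shift_dilation_isometry_and_polynomial_compression
    {H : Type*} [NormedAddCommGroup H] [InnerProductSpace ℂ H] [CompleteSpace H]
    (A : H →L[ℂ] H) (hA : ‖A‖ ≤ 1)
    (D : H →L[ℂ] H) (hD : D.IsPositive) (hD2 : D * D = 1 - adjoint A * A)
    (V : lp (fun _ : ℕ => H) 2 →L[ℂ] lp (fun _ : ℕ => H) 2)
    (hV : ∀ x : lp (fun _ : ℕ => H) 2,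
      (V x) 0 = A (x 0) ∧ (V x) 1 = D (x 0) ∧ ∀ n : ℕ, (V x) (n + 2) = x (n + 1)) :
    Isometry V ∧
      ∀ (f : Polynomial ℂ) (h : H),
        (aeval A f) h = ((aeval V f) (lp.single 2 0 h)) 0 :=
  shift_dilation_isometry_and_polynomial_compression_general A D hD hD2 V hV
end

section
/- Let S′ be the n×n lower triangular matrix with all entries on and below the main diagonal equal to 1. Then ‖S′‖ = 1/(2 sin(π/(4n+2))), and in particular ‖S′‖ ≤ n + 1/2. -/
open Real Finset

/-!
Write `y = S x` for the partial sums of `x`, so that `‖x‖² = energy y` with `energy` the quadratic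
form of `(S⁻¹)ᵀ S⁻¹`. Instead of diagonalising that tridiagonal matrix, use one eigenvector: with
`θ = π / (2n + 1)`, the vector `vᵢ = sin ((i + 1) θ)` is positive with eigenvalue
`μ = 4 sin² (θ / 2)`. The discrete Picone identity writes `energy y - μ ‖y‖²` as a sum of squares
that vanishes at `y = v`, so `√μ ‖S x‖ ≤ ‖x‖` with equality at `x = S⁻¹ v`, i.e.
`‖S‖ = 1 / (2 sin (θ / 2))`. Jordan's inequality `sin t ≥ 2t/π` gives `‖S‖ ≤ n + 1/2`.
-/

namespace ContinuousLinearMap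

variable {𝕜 E F : Type*} [NontriviallyNormedField 𝕜] [SeminormedAddCommGroup E]
  [SeminormedAddCommGroup F] [NormedSpace 𝕜 E] [NormedSpace 𝕜 F]

theorem opNorm_eq_inv_of_mul_norm_le_of_eq {T : E →L[𝕜] F} {c : ℝ} (hc : 0 < c)
    (hle : ∀ x, c * ‖T x‖ ≤ ‖x‖) {x₀ : E} (hx₀ : ‖x₀‖ ≠ 0) (heq : c * ‖T x₀‖ = ‖x₀‖) :
    ‖T‖ = c⁻¹ := by
  refine le_antisymm (T.opNorm_le_bound (inv_nonneg.2 hc.le) fun x => ?_) ?_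
  · rw [inv_mul_eq_div, le_div_iff₀' hc]
    exact hle x
  · have hTx₀ : ‖T x₀‖ ≠ 0 := fun h => hx₀ (by rw [← heq, h, mul_zero])
    calc c⁻¹ = ‖T x₀‖ / ‖x₀‖ := by rw [← heq]; field_simp
      _ ≤ ‖T‖ := T.ratio_le_opNorm x₀

end ContinuousLinearMap

theorem EuclideanSpace.exists_eq_toLp_seq {n : ℕ} (x : EuclideanSpace ℝ (Fin n)) :
    ∃ a : ℕ → ℝ, x = WithLp.toLp 2 fun j : Fin n => a j :=
  ⟨fun k => if h : k < n then x ⟨k, h⟩ else 0, by ext j; simp⟩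

theorem EuclideanSpace.norm_sq_toLp_seq {n : ℕ} (a : ℕ → ℝ) :
    ‖(WithLp.toLp 2 fun j : Fin n => a j : EuclideanSpace ℝ (Fin n))‖ ^ 2 =
      ∑ j ∈ range n, a j ^ 2 := by
  rw [EuclideanSpace.real_norm_sq_eq, ← Fin.sum_univ_eq_sum_range (fun j => a j ^ 2)]

theorem two_sub_sq_two_mul_sin_half_mul_sin (θ x : ℝ) :
    (2 - (2 * sin (θ / 2)) ^ 2) * sin x = sin (x - θ) + sin (x + θ) := by
  have hcos : cos θ = 1 - 2 * sin (θ / 2) ^ 2 := by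
    conv_lhs => rw [← mul_div_cancel₀ θ two_ne_zero]
    rw [cos_two_mul', cos_sq']
    ring
  rw [sin_sub, sin_add, hcos]
  ring

theorem one_div_two_mul_sin_pi_div_le {x : ℝ} (hx : 0 ≤ x) :
    1 / (2 * sin (π / (4 * x + 2))) ≤ x + 1 / 2 := by
  have hjordan := mul_le_sin (x := π / (4 * x + 2)) (by positivity)
    (div_le_div_of_nonneg_left pi_pos.le two_pos (by linarith))
  rw [← mul_div_assoc, div_mul_cancel₀ 2 pi_pos.ne'] at hjordan
  rw [div_le_iff₀ (by linarith [show 0 < 2 / (4 * x + 2) by positivity])]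
  calc 1 = (x + 1 / 2) * 2 * (2 / (4 * x + 2)) := by field_simp; ring
    _ ≤ (x + 1 / 2) * (2 * sin (π / (4 * x + 2))) := by
      rw [mul_assoc]; gcongr

theorem sq_div_eq_of_recurrence {a b c μ y z : ℝ} (ha : 0 < a) (hb : 0 < b)
    (hrec : (2 - μ) * b = a + c) :
    (b * y - a * z) ^ 2 / (a * b) =
      (z - y) ^ 2 - μ * z ^ 2 + ((b / a - 1) * y ^ 2 - (c / b - 1) * z ^ 2) := by
  field_simp
  linear_combination (-(a * z ^ 2)) * hrec

namespace LowerTriangularOnes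

/-- The quadratic form of `(S⁻¹)ᵀ S⁻¹` on `(y 0, …, y m)`. -/
def energy (m : ℕ) (y : ℕ → ℝ) : ℝ := y 0 ^ 2 + ∑ i ∈ range m, (y (i + 1) - y i) ^ 2

theorem energy_partialSums (m : ℕ) (a : ℕ → ℝ) :
    energy m (fun k => ∑ j ∈ range (k + 1), a j) = ∑ j ∈ range (m + 1), a j ^ 2 := by
  simp only [energy, sum_range_succ_sub_sum, zero_add, sum_range_one, sum_range_succ' _ m]
  ring

/-- `v` is a positive eigenvector, for the eigenvalue `μ`, of the tridiagonal matrix of `energy m`: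
the boundary rows are the three-term recurrence with `v (-1) = 0` and with `v (m + 1) = v m`. -/
structure IsGroundState (m : ℕ) (μ : ℝ) (v : ℕ → ℝ) : Prop where
  pos : ∀ i ≤ m, 0 < v i
  recurrence_zero : (2 - μ) * v 0 = v 1
  recurrence_succ : ∀ i < m, (2 - μ) * v (i + 1) = v i + v (i + 2)
  boundary : v (m + 1) = v m

namespace IsGroundState

variable {m : ℕ} {μ : ℝ} {v : ℕ → ℝ}

/-- The recurrence splits each summand into a local term and a telescoping one. -/
theorem energy_sub_mul_sum_sq (hv : IsGroundState m μ v) (y : ℕ → ℝ) :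
    energy m y - μ * ∑ i ∈ range (m + 1), y i ^ 2 =
      ∑ i ∈ range m, (v (i + 1) * y i - v i * y (i + 1)) ^ 2 / (v i * v (i + 1)) := by
  rw [sum_congr rfl fun i hi => sq_div_eq_of_recurrence (hv.pos i (by grind))
    (hv.pos (i + 1) (by grind)) (hv.recurrence_succ i (mem_range.1 hi)), sum_add_distrib,
    sum_range_sub' (fun i => (v (i + 1) / v i - 1) * y i ^ 2), hv.boundary,
    div_self (hv.pos m le_rfl).ne', ← hv.recurrence_zero,
    mul_div_cancel_right₀ _ (hv.pos 0 (Nat.zero_le _)).ne', sum_sub_distrib, ← mul_sum,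
    energy, sum_range_succ' _ m]
  ring

theorem mul_sum_sq_le_energy (hv : IsGroundState m μ v) (y : ℕ → ℝ) :
    μ * ∑ i ∈ range (m + 1), y i ^ 2 ≤ energy m y := by
  have hid := hv.energy_sub_mul_sum_sq y
  have hnonneg : 0 ≤ ∑ i ∈ range m, (v (i + 1) * y i - v i * y (i + 1)) ^ 2 / (v i * v (i + 1)) :=
    sum_nonneg fun i hi => div_nonneg (sq_nonneg _)
      (mul_pos (hv.pos i (by grind)) (hv.pos (i + 1) (by grind))).le
  linarith

theorem energy_eq (hv : IsGroundState m μ v) : energy m v = μ * ∑ i ∈ range (m + 1), v i ^ 2 := by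
  have hid := hv.energy_sub_mul_sum_sq v
  simp only [mul_comm (v (_ + 1)), sub_self, zero_pow two_ne_zero, zero_div,
    sum_const_zero] at hid
  linarith

end IsGroundState

theorem isGroundState_sin (m : ℕ) :
    IsGroundState m ((2 * sin (π / (2 * m + 3) / 2)) ^ 2)
      (fun i => sin ((i + 1) * (π / (2 * m + 3)))) where
  pos i hi := by
    refine sin_pos_of_pos_of_lt_pi (by positivity) ?_
    rw [← mul_div_assoc, div_lt_iff₀ (by positivity)]
    have : (i : ℝ) ≤ m := by exact_mod_cast hi
    nlinarith [pi_pos]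
  recurrence_zero := by
    rw [two_sub_sq_two_mul_sin_half_mul_sin]
    ring_nf
    simp
  recurrence_succ i _ := by
    rw [two_sub_sq_two_mul_sin_half_mul_sin]
    push_cast
    ring_nf
  boundary := by
    rw [← sin_pi_sub]
    congr 1
    push_cast
    field_simp
    ring

theorem sin_pi_div_half_pos (m : ℕ) : 0 < sin (π / (2 * m + 3) / 2) := by
  refine sin_pos_of_pos_of_lt_pi (by positivity) ?_
  rw [div_div, div_lt_iff₀ (by positivity)]
  nlinarith [pi_pos, (Nat.cast_nonneg m : (0 : ℝ) ≤ m)]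

def lowerOnes (n : ℕ) : Matrix (Fin n) (Fin n) ℝ := Matrix.of fun i j => if j ≤ i then 1 else 0

section LowerOnes

variable {n : ℕ}

theorem lowerOnes_mulVec_seq (a : ℕ → ℝ) (i : Fin n) :
    (lowerOnes n).mulVec (fun j : Fin n => a j) i = ∑ j ∈ range (i + 1), a j := by
  simp only [lowerOnes, Matrix.mulVec, dotProduct, Matrix.of_apply, ite_mul, one_mul, zero_mul,
    Fin.le_iff_val_le_val]
  rw [Fin.sum_univ_eq_sum_range (fun j => if j ≤ (i : ℕ) then a j else 0), ← sum_filter]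
  congr 1
  ext j
  simp only [mem_filter, mem_range]
  omega

theorem norm_sq_toEuclideanCLM_lowerOnes_toLp (a : ℕ → ℝ) :
    ‖Matrix.toEuclideanCLM (𝕜 := ℝ) (lowerOnes n) (WithLp.toLp 2 fun j : Fin n => a j)‖ ^ 2 =
      ∑ i ∈ range n, (∑ j ∈ range (i + 1), a j) ^ 2 := by
  rw [Matrix.toEuclideanCLM_toLp, funext (lowerOnes_mulVec_seq a),
    EuclideanSpace.norm_sq_toLp_seq fun i => ∑ j ∈ range (i + 1), a j]

end LowerOnes

theorem two_mul_sin_mul_norm_toEuclideanCLM_lowerOnes_le (m : ℕ)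
    (x : EuclideanSpace ℝ (Fin (m + 1))) :
    2 * sin (π / (2 * m + 3) / 2) * ‖Matrix.toEuclideanCLM (𝕜 := ℝ) (lowerOnes (m + 1)) x‖ ≤
      ‖x‖ := by
  obtain ⟨a, rfl⟩ := EuclideanSpace.exists_eq_toLp_seq x
  have h := (isGroundState_sin m).mul_sum_sq_le_energy fun k => ∑ j ∈ range (k + 1), a j
  rw [← norm_sq_toEuclideanCLM_lowerOnes_toLp, energy_partialSums,
    ← EuclideanSpace.norm_sq_toLp_seq, ← mul_pow] at h
  have hsin := sin_pi_div_half_pos m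
  exact (pow_le_pow_iff_left₀ (by positivity) (norm_nonneg _) two_ne_zero).1 h

theorem two_mul_sin_mul_norm_toEuclideanCLM_lowerOnes_sin_sub_sin (m : ℕ) :
    let θ := π / (2 * m + 3)
    let x : EuclideanSpace ℝ (Fin (m + 1)) :=
      WithLp.toLp 2 fun j : Fin (m + 1) => sin ((j + 1) * θ) - sin (j * θ)
    ‖x‖ ≠ 0 ∧ 2 * sin (θ / 2) * ‖Matrix.toEuclideanCLM (𝕜 := ℝ) (lowerOnes (m + 1)) x‖ = ‖x‖ := by
  intro θ x
  have hv := isGroundState_sin m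
  have hsums (k : ℕ) : ∑ j ∈ range (k + 1), (sin ((j + 1) * θ) - sin (j * θ)) =
      sin ((k + 1) * θ) := by
    simpa using sum_range_sub (fun j : ℕ => sin (j * θ)) (k + 1)
  have hTx : ‖Matrix.toEuclideanCLM (𝕜 := ℝ) (lowerOnes (m + 1)) x‖ ^ 2 =
      ∑ i ∈ range (m + 1), sin ((i + 1) * θ) ^ 2 := by
    rw [norm_sq_toEuclideanCLM_lowerOnes_toLp (fun j : ℕ => sin ((j + 1) * θ) - sin (j * θ))]
    simp only [hsums]
  have hx : ‖x‖ ^ 2 = (2 * sin (θ / 2)) ^ 2 * ∑ i ∈ range (m + 1), sin ((i + 1) * θ) ^ 2 := by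
    rw [EuclideanSpace.norm_sq_toLp_seq (fun j : ℕ => sin ((j + 1) * θ) - sin (j * θ)),
      ← energy_partialSums, funext hsums, hv.energy_eq]
  have hpos : 0 < ∑ i ∈ range (m + 1), sin ((i + 1) * θ) ^ 2 :=
    sum_pos (fun i hi => pow_pos (hv.pos i (by grind)) 2) nonempty_range_add_one
  have hc := mul_pos two_pos (sin_pi_div_half_pos m)
  have hx_pos : 0 < ‖x‖ ^ 2 := hx ▸ mul_pos (pow_pos hc 2) hpos
  refine ⟨fun h => by simp [h] at hx_pos, ?_⟩
  rw [← pow_left_inj₀ (by positivity) (norm_nonneg _) two_ne_zero, mul_pow, hTx, hx]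

end LowerTriangularOnes

open LowerTriangularOnes

theorem opNorm_lower_triangular_ones (n : ℕ) (hn : 0 < n)
    (S : Matrix (Fin n) (Fin n) ℝ)
    (hS : S = Matrix.of fun i j : Fin n => if j ≤ i then (1 : ℝ) else 0) :
    ‖Matrix.toEuclideanCLM (𝕜 := ℝ) S‖ = 1 / (2 * Real.sin (π / (4 * n + 2))) ∧
      ‖Matrix.toEuclideanCLM (𝕜 := ℝ) S‖ ≤ n + 1 / 2 := by
  obtain ⟨m, rfl⟩ := Nat.exists_eq_add_one_of_ne_zero hn.ne'
  have hangle : π / (4 * ((m + 1 : ℕ) : ℝ) + 2) = π / (2 * m + 3) / 2 := by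
    push_cast
    rw [div_div]
    ring_nf
  have hnorm : ‖Matrix.toEuclideanCLM (𝕜 := ℝ) S‖ = 1 / (2 * sin (π / (2 * m + 3) / 2)) := by
    obtain ⟨hx₀, heq⟩ := two_mul_sin_mul_norm_toEuclideanCLM_lowerOnes_sin_sub_sin m
    rw [hS, one_div]
    exact ContinuousLinearMap.opNorm_eq_inv_of_mul_norm_le_of_eq
      (mul_pos two_pos (sin_pi_div_half_pos m))
      (two_mul_sin_mul_norm_toEuclideanCLM_lowerOnes_le m) hx₀ heq
  refine ⟨by rw [hangle, hnorm], ?_⟩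
  rw [hnorm, ← hangle]
  exact one_div_two_mul_sin_pi_div_le (Nat.cast_nonneg _)
end

section
/- In the ADI iteration for AX − XB = C with shifts α_j, β_j (such that A − β_j and B − α_j are invertible), one step satisfies X_k = (A − α_k)(A − β_k)^{-1} X_{k-1} (B − β_k)(B − α_k)^{-1} + (β_k − α_k)(A − β_k)^{-1} C (B − α_k)^{-1}. Consequently, if rank(C) = v, then rank(X_k) ≤ kv + rank(X_0). -/
open Matrix

lemma matrix_rank_add_le {m n : ℕ} (A B : Matrix (Fin m) (Fin n) ℂ) :
    (A + B).rank ≤ A.rank + B.rank := by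
  have h : LinearMap.range (A + B).mulVecLin ≤
      LinearMap.range A.mulVecLin ⊔ LinearMap.range B.mulVecLin := by
    rintro x ⟨y, rfl⟩
    rw [Matrix.mulVecLin_add]
    exact Submodule.add_mem_sup ⟨y, rfl⟩ ⟨y, rfl⟩
  exact (Submodule.finrank_mono h).trans
    (Submodule.finrank_add_le_finrank_add_finrank _ _)

lemma matrix_rank_smul_le {m n : ℕ} (c : ℂ) (A : Matrix (Fin m) (Fin n) ℂ) :
    (c • A).rank ≤ A.rank := by
  have : c • A = (c • (1 : Matrix (Fin m) (Fin m) ℂ)) * A := by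
    rw [Matrix.smul_mul, Matrix.one_mul]
  rw [this]
  exact Matrix.rank_mul_le_right _ _

theorem adi_step_formula_and_rank (m n v : ℕ)
    (A : Matrix (Fin m) (Fin m) ℂ) (B : Matrix (Fin n) (Fin n) ℂ)
    (C : Matrix (Fin m) (Fin n) ℂ)
    (α β : ℕ → ℂ)
    (hA : ∀ j : ℕ, IsUnit (A - β (j + 1) • 1))
    (hB : ∀ j : ℕ, IsUnit (B - α (j + 1) • 1))
    (X Xhalf : ℕ → Matrix (Fin m) (Fin n) ℂ)
    (h1 : ∀ j : ℕ, (A - β (j + 1) • 1) * Xhalf (j + 1) = X j * (B - β (j + 1) • 1) + C)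
    (h2 : ∀ j : ℕ, X (j + 1) * (B - α (j + 1) • 1) = (A - α (j + 1) • 1) * Xhalf (j + 1) - C)
    (hC : C.rank = v) :
    (∀ k : ℕ,
      X (k + 1) =
        (A - α (k + 1) • 1) * (A - β (k + 1) • 1)⁻¹ * X k *
            ((B - β (k + 1) • 1) * (B - α (k + 1) • 1)⁻¹) +
          (β (k + 1) - α (k + 1)) • ((A - β (k + 1) • 1)⁻¹ * C * (B - α (k + 1) • 1)⁻¹)) ∧
      ∀ k : ℕ, (X k).rank ≤ k * v + (X 0).rank := by
  have key : ∀ k : ℕ,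
      X (k + 1) =
        (A - α (k + 1) • 1) * (A - β (k + 1) • 1)⁻¹ * X k *
            ((B - β (k + 1) • 1) * (B - α (k + 1) • 1)⁻¹) +
          (β (k + 1) - α (k + 1)) • ((A - β (k + 1) • 1)⁻¹ * C * (B - α (k + 1) • 1)⁻¹) := by
    intro k
    set Aα := A - α (k + 1) • 1
    set Aβ := A - β (k + 1) • 1
    set Bα := B - α (k + 1) • 1
    set Bβ := B - β (k + 1) • 1
    have hAβ : IsUnit Aβ.det := (Matrix.isUnit_iff_isUnit_det _).mp (hA k)
    have hBα : IsUnit Bα.det := (Matrix.isUnit_iff_isUnit_det _).mp (hB k)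
    have hAβc : Aβ⁻¹ * Aβ = 1 := Matrix.nonsing_inv_mul _ hAβ
    have hBαc : Bα⁻¹ * Bα = 1 := Matrix.nonsing_inv_mul _ hBα
    have hBαc' : Bα * Bα⁻¹ = 1 := Matrix.mul_nonsing_inv _ hBα
    -- Xhalf expression
    have hXhalf : Xhalf (k + 1) = Aβ⁻¹ * (X k * Bβ + C) := by
      have := h1 k
      calc Xhalf (k + 1) = Aβ⁻¹ * (Aβ * Xhalf (k + 1)) := by
            rw [← Matrix.mul_assoc, hAβc, Matrix.one_mul]
        _ = Aβ⁻¹ * (X k * Bβ + C) := by rw [this]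
    -- key algebraic identity : Aα * Aβ⁻¹ = 1 + (β - α) • Aβ⁻¹
    have hident : Aα * Aβ⁻¹ = 1 + (β (k + 1) - α (k + 1)) • Aβ⁻¹ := by
      have : Aα = Aβ + (β (k + 1) - α (k + 1)) • (1 : Matrix (Fin m) (Fin m) ℂ) := by
        simp only [Aα, Aβ, sub_smul]
        ring_nf
        abel
      rw [this, Matrix.add_mul, Matrix.mul_nonsing_inv _ hAβ, Matrix.smul_mul, Matrix.one_mul]
    -- Multiply both sides of h2 on the right by Bα⁻¹
    have hX : X (k + 1) = (Aα * Xhalf (k + 1) - C) * Bα⁻¹ := by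
      have := h2 k
      calc X (k + 1) = X (k + 1) * Bα * Bα⁻¹ := by
            rw [Matrix.mul_assoc, hBαc', Matrix.mul_one]
        _ = (Aα * Xhalf (k + 1) - C) * Bα⁻¹ := by rw [this]
    rw [hX, hXhalf]
    rw [← Matrix.mul_assoc, hident]
    simp only [Matrix.add_mul, Matrix.one_mul, Matrix.smul_mul, Matrix.mul_add, Matrix.sub_mul,
      Matrix.add_mul]
    simp only [Matrix.mul_assoc]
    abel
  refine ⟨key, ?_⟩
  intro k
  induction k with
  | zero => simp
  | succ k ih =>
    have := key k
    calc (X (k + 1)).rank ≤ ((A - α (k + 1) • 1) * (A - β (k + 1) • 1)⁻¹ * X k *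
            ((B - β (k + 1) • 1) * (B - α (k + 1) • 1)⁻¹)).rank +
          ((β (k + 1) - α (k + 1)) • ((A - β (k + 1) • 1)⁻¹ * C * (B - α (k + 1) • 1)⁻¹)).rank := by
            rw [this]; exact matrix_rank_add_le _ _
      _ ≤ (X k).rank + v := by
          gcongr
          · calc ((A - α (k + 1) • 1) * (A - β (k + 1) • 1)⁻¹ * X k *
                ((B - β (k + 1) • 1) * (B - α (k + 1) • 1)⁻¹)).rank
                ≤ ((A - α (k + 1) • 1) * (A - β (k + 1) • 1)⁻¹ * X k).rank :=
                  Matrix.rank_mul_le_left _ _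
              _ ≤ (X k).rank := Matrix.rank_mul_le_right _ _
          · calc ((β (k + 1) - α (k + 1)) • ((A - β (k + 1) • 1)⁻¹ * C * (B - α (k + 1) • 1)⁻¹)).rank
                ≤ ((A - β (k + 1) • 1)⁻¹ * C * (B - α (k + 1) • 1)⁻¹).rank := matrix_rank_smul_le _ _
              _ ≤ ((A - β (k + 1) • 1)⁻¹ * C).rank := Matrix.rank_mul_le_left _ _
              _ ≤ C.rank := Matrix.rank_mul_le_right _ _
              _ = v := hC
      _ ≤ k * v + (X 0).rank + v := by gcongr
      _ = (k + 1) * v + (X 0).rank := by ring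
end
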